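/- arXiv:2302.11625 — 2 statements merged into one kernel-verified Lean document; each statement's English description precedes it below -/
import Mathlib

section
/- In the free algebra over a field K generated by x_1, x_2, x_3 with relations x_i x_j = q x_j x_i for i < j (quantum affine 3-space), for any a_1, a_2, a_3 in K^× and b in K, the assignment x_1 ↦ a_1 x_1, x_2 ↦ a_2 x_2 + b x_1 x_3, x_3 ↦ a_3 x_3 extends to a K-algebra automorphism. -/
/-- The defining relations of quantum affine 3-space: `x i * x j = q • (x j * x i)` for `i < j`. -/
inductive QA3Rel (K : Type*) [Field K] (q : K) :
    FreeAlgebra K (Fin 3) → FreeAlgebra K (Fin 3) → Prop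
  | rel (i j : Fin 3) (h : i < j) :
      QA3Rel K q (FreeAlgebra.ι K i * FreeAlgebra.ι K j)
        (q • (FreeAlgebra.ι K j * FreeAlgebra.ι K i))

/-- Quantum affine 3-space `A_q(K³)`. -/
abbrev QA3 (K : Type*) [Field K] (q : K) := RingQuot (QA3Rel K q)

/-- The generators `x₁, x₂, x₃` of quantum affine 3-space. -/
noncomputable def QA3.x (K : Type*) [Field K] (q : K) (i : Fin 3) : QA3 K q :=
  RingQuot.mkAlgHom K (QA3Rel K q) (FreeAlgebra.ι K i)

/-!
The assignment `x₁ ↦ α x₁`, `x₂ ↦ β x₂ + δ x₁x₃`, `x₃ ↦ γ x₃` respects the relations because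
`x₁x₃` commutes with `x₁` and `x₃` in exactly the same way as `x₂` does. These triangular
endomorphisms compose by `(α, β, γ, δ) ∘ (α', β', γ', δ') = (αα', ββ', γγ', β'δ + δ'αγ)`,
so when `α, β, γ` are units the one with parameters `(α⁻¹, β⁻¹, γ⁻¹, -δ/(αβγ))` is a two-sided
inverse.
-/

namespace QA3

variable {K : Type*} [Field K] {q : K}

theorem x_mul_x_of_lt {i j : Fin 3} (h : i < j) : x K q i * x K q j = q • (x K q j * x K q i) := by
  simpa [x] using RingQuot.mkAlgHom_rel K (QA3Rel.rel (q := q) i j h)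

theorem x_mul_x_mul_of_lt {i j : Fin 3} (h : i < j) (y : QA3 K q) :
    x K q i * (x K q j * y) = q • (x K q j * (x K q i * y)) := by
  rw [← mul_assoc, x_mul_x_of_lt h, smul_mul_assoc, mul_assoc]

section Lift

variable {A : Type*} [Semiring A] [Algebra K A]

noncomputable def lift (f : Fin 3 → A) (hf : ∀ i j, i < j → f i * f j = q • (f j * f i)) :
    QA3 K q →ₐ[K] A :=
  RingQuot.liftAlgHom K ⟨FreeAlgebra.lift K f, by rintro _ _ ⟨i, j, h⟩; simpa using hf i j h⟩

@[simp]
theorem lift_x (f : Fin 3 → A) (hf : ∀ i j, i < j → f i * f j = q • (f j * f i)) (i : Fin 3) :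
    lift f hf (x K q i) = f i := by
  rw [x, lift, RingQuot.liftAlgHom_mkAlgHom_apply, FreeAlgebra.lift_ι_apply]

theorem algHom_ext {f g : QA3 K q →ₐ[K] A} (h : ∀ i, f (x K q i) = g (x K q i)) : f = g :=
  RingQuot.ringQuot_ext' _ _ _ (FreeAlgebra.hom_ext (funext h))

end Lift

noncomputable def triangularImage (α β γ δ : K) : Fin 3 → QA3 K q :=
  ![α • x K q 0, β • x K q 1 + δ • (x K q 0 * x K q 2), γ • x K q 2]

theorem triangularImage_mul_of_lt (α β γ δ : K) {i j : Fin 3} (h : i < j) :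
    triangularImage (q := q) α β γ δ i * triangularImage α β γ δ j =
      q • (triangularImage α β γ δ j * triangularImage α β γ δ i) := by
  fin_cases i <;> fin_cases j <;> (try exact absurd h (by decide)) <;>
    simp only [triangularImage, Fin.zero_eta, Fin.mk_one, Fin.reduceFinMk, Fin.isValue,
      Matrix.cons_val, mul_add, add_mul, smul_mul_assoc, mul_smul_comm, mul_assoc,
      x_mul_x_of_lt, x_mul_x_mul_of_lt, Fin.reduceLT] <;> module

noncomputable def triangularHom (α β γ δ : K) : QA3 K q →ₐ[K] QA3 K q :=
  lift (triangularImage α β γ δ) fun _ _ ↦ triangularImage_mul_of_lt α β γ δ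

@[simp]
theorem triangularHom_x (α β γ δ : K) (i : Fin 3) :
    triangularHom α β γ δ (x K q i) = triangularImage α β γ δ i :=
  lift_x _ _ i

theorem triangularHom_one_one_one_zero : triangularHom (q := q) 1 1 1 0 = AlgHom.id K _ := by
  refine algHom_ext fun i ↦ ?_
  fin_cases i <;> simp [triangularImage]

theorem triangularHom_comp (α β γ δ α' β' γ' δ' : K) :
    (triangularHom (q := q) α β γ δ).comp (triangularHom α' β' γ' δ') =
      triangularHom (α * α') (β * β') (γ * γ') (β' * δ + δ' * (α * γ)) := by
  refine algHom_ext fun i ↦ ?_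
  fin_cases i <;> simp [triangularImage, smul_smul] <;> module

theorem triangularHom_comp_eq_id {α β γ δ α' β' γ' δ' : K} (hα : α * α' = 1) (hβ : β * β' = 1)
    (hγ : γ * γ' = 1) (hδ : β' * δ + δ' * (α * γ) = 0) :
    (triangularHom (q := q) α β γ δ).comp (triangularHom α' β' γ' δ') = AlgHom.id K _ := by
  rw [triangularHom_comp, hα, hβ, hγ, hδ, triangularHom_one_one_one_zero]

noncomputable def triangularEquiv (α β γ : Kˣ) (δ : K) : QA3 K q ≃ₐ[K] QA3 K q :=
  AlgEquiv.ofAlgHom (triangularHom α β γ δ)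
    (triangularHom (α : K)⁻¹ (β : K)⁻¹ (γ : K)⁻¹ (-(δ / (α * β * γ))))
    (triangularHom_comp_eq_id (by simp) (by simp) (by simp) (by field_simp; ring))
    (triangularHom_comp_eq_id (by simp) (by simp) (by simp) (by field_simp; ring))

@[simp]
theorem triangularEquiv_apply (α β γ : Kˣ) (δ : K) (y : QA3 K q) :
    triangularEquiv α β γ δ y = triangularHom (α : K) β γ δ y :=
  rfl

end QA3

theorem qa3_automorphism_exists_general (K : Type*) [Field K] (q : K)
    (a₁ a₂ a₃ : Kˣ) (b : K) :
    ∃ φ : QA3 K q ≃ₐ[K] QA3 K q,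
      φ (QA3.x K q 0) = (a₁ : K) • QA3.x K q 0 ∧
      φ (QA3.x K q 1) = (a₂ : K) • QA3.x K q 1 + b • (QA3.x K q 0 * QA3.x K q 2) ∧
      φ (QA3.x K q 2) = (a₃ : K) • QA3.x K q 2 :=
  ⟨QA3.triangularEquiv a₁ a₂ a₃ b, by simp [QA3.triangularImage]⟩

/-- For any `a₁, a₂, a₃ ∈ K^×` and `b ∈ K`, the assignment
`x₁ ↦ a₁ x₁`, `x₂ ↦ a₂ x₂ + b x₁ x₃`, `x₃ ↦ a₃ x₃` extends to a `K`-algebra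
automorphism of quantum affine 3-space. -/
theorem qa3_automorphism_exists (K : Type*) [Field K] (q : K) (hq0 : q ≠ 0)
    (hq : ∀ n : ℕ, n ≠ 0 → q ^ n ≠ 1) (a₁ a₂ a₃ : Kˣ) (b : K) :
    ∃ φ : QA3 K q ≃ₐ[K] QA3 K q,
      φ (QA3.x K q 0) = (a₁ : K) • QA3.x K q 0 ∧
      φ (QA3.x K q 1) = (a₂ : K) • QA3.x K q 1 + b • (QA3.x K q 0 * QA3.x K q 2) ∧
      φ (QA3.x K q 2) = (a₃ : K) • QA3.x K q 2 :=
  qa3_automorphism_exists_general K q a₁ a₂ a₃ b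
end

section
/- Let R be an N-graded K-algebra, q ∈ K^× not a root of unity, and Θ ∈ R a nonzero element. Suppose x_1, ..., x_n are linearly independent elements of R satisfying x_j Θ = q^{d_j} Θ x_j for pairwise-distinct-degree Q-homogeneous elements Θ x_1, ..., Θ x_n (in particular Θ x_1, ..., Θ x_n are linearly independent), with d_1 ∉ {d_2, ..., d_n}. If φ is an algebra endomorphism of R with φ(Θ) = c Θ for some c ∈ K^× and φ(x_1) = Σ_j c_j x_j, then c_2 = ⋯ = c_n = 0, i.e. φ(x_1) ∈ K x_1. -/
/-- Rigidity of graded endomorphisms: if `Θ` is sent to a scalar multiple of itself by `φ`,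
the `x j` satisfy `x j * Θ = q^(d j) • (Θ * x j)` with the `Θ * x j` linearly independent,
`d 0 ∉ {d 1, …, d n}`, and `φ (x 0) = Σ c j • x j`, then `c j = 0` for all `j ≠ 0`;
that is, `φ (x 0) ∈ K • x 0`. -/
theorem endo_sends_root_vector_to_multiple {K R : Type*} [Field K] [Ring R] [Algebra K R]
    (q : Kˣ) (hq : ∀ m : ℤ, m ≠ 0 → q ^ m ≠ 1)
    (n : ℕ) (x : Fin (n + 1) → R) (Θ : R) (hΘ : Θ ≠ 0) (d : Fin (n + 1) → ℤ)
    (hcomm : ∀ j, x j * Θ = ((q ^ (d j) : Kˣ) : K) • (Θ * x j))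
    (hind : LinearIndependent K (fun j : Fin (n + 1) => Θ * x j))
    (hd : ∀ j : Fin (n + 1), j ≠ 0 → d j ≠ d 0)
    (φ : R →ₐ[K] R) (c : Kˣ) (hφΘ : φ Θ = (c : K) • Θ)
    (cs : Fin (n + 1) → K) (hφx : φ (x 0) = ∑ j, cs j • x j) :
    ∀ j : Fin (n + 1), j ≠ 0 → cs j = 0 := by
  have h1 := congrArg φ (hcomm 0)
  rw [map_mul, map_smul, map_mul, hφΘ, hφx] at h1
  -- cancel the unit c
  have h2 : (∑ j, cs j • x j) * Θ = ((q ^ (d 0) : Kˣ) : K) • (Θ * ∑ j, cs j • x j) := by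
    have h1' := congrArg (fun v : R => ((c : K)⁻¹ : K) • v) h1
    simp only [mul_smul_comm, smul_mul_assoc, smul_smul] at h1' ⊢
    rw [inv_mul_cancel₀ c.ne_zero, one_smul] at h1'
    rw [h1']
    rw [show ((c:K)⁻¹ * (((q ^ (d 0) : Kˣ) : K) * (c:K))) = ((q ^ (d 0) : Kˣ) : K) by
      field_simp]
  have h3 : ∑ j, (cs j * ((q ^ (d j) : Kˣ) : K) - ((q ^ (d 0) : Kˣ) : K) * cs j) •
      (Θ * x j) = 0 := by
    have lhs : (∑ j, cs j • x j) * Θ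
        = ∑ j, (cs j * ((q ^ (d j) : Kˣ) : K)) • (Θ * x j) := by
      rw [Finset.sum_mul]
      refine Finset.sum_congr rfl fun j _ => ?_
      rw [smul_mul_assoc, hcomm j, smul_smul]
    have rhs : ((q ^ (d 0) : Kˣ) : K) • (Θ * ∑ j, cs j • x j)
        = ∑ j, (((q ^ (d 0) : Kˣ) : K) * cs j) • (Θ * x j) := by
      rw [Finset.mul_sum, Finset.smul_sum]
      refine Finset.sum_congr rfl fun j _ => ?_
      rw [mul_smul_comm, smul_smul]
    rw [lhs, rhs] at h2
    simp only [sub_smul, Finset.sum_sub_distrib, h2, sub_self]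
  have h4 := Fintype.linearIndependent_iff.mp hind _ h3
  intro j hj
  have h5 := h4 j
  have hne : ((q ^ (d j) : Kˣ) : K) ≠ ((q ^ (d 0) : Kˣ) : K) := by
    intro heq
    have : (q ^ (d j) : Kˣ) = q ^ (d 0) := Units.ext heq
    have : q ^ (d j - d 0) = 1 := by rw [zpow_sub, this, mul_inv_cancel]
    exact hq _ (sub_ne_zero.2 (hd j hj)) this
  have : cs j * (((q ^ (d j) : Kˣ) : K) - ((q ^ (d 0) : Kˣ) : K)) = 0 := by
    rw [mul_sub]; linear_combination h5
  rcases mul_eq_zero.mp this with h | h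
  · exact h
  · exact absurd (sub_eq_zero.mp h) hne
end
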